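/- Let S be a finite set, a, b : S → ℝ with a(s) > 0 for all s, and τ > 1. The minimizer q of the function q ↦ KL(q‖p) + (τ−1)·KL(q‖μ) over probability distributions q on S, where p and μ are fixed probability distributions with full support, satisfies q(s) ∝ μ(s)^{1−1/τ} · p(s)^{1/τ}. -/

import Mathlib

/-!
Since `τ log (μ^{1-1/τ} p^{1/τ}) = (τ-1) log μ + log p`, the objective equals `τ ∑ q log (q / w)`
for the unnormalized weights `w = μ^{1-1/τ} p^{1/τ}`. By Gibbs' inequality against `w / ∑ w` this
is at least `-τ log ∑ w`, and that value is attained at `q* = w / ∑ w`.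
-/

open Real Finset InformationTheory

section Gibbs

variable {S : Type*} [Fintype S]

lemma sum_sub_sum_le_sum_mul_log_div (q r : S → ℝ) (hq : ∀ s, 0 ≤ q s) (hr : ∀ s, 0 < r s) :
    ∑ s, q s - ∑ s, r s ≤ ∑ s, q s * log (q s / r s) := by
  -- `q log (q / r) - (q - r) = r · klFun (q / r)`
  have pointwise : ∀ s, q s - r s ≤ q s * log (q s / r s) := fun s => by
    have hkl := mul_nonneg (hr s).le (klFun_nonneg (div_nonneg (hq s) (hr s).le))
    rw [klFun_apply] at hkl
    have hr0 := (hr s).ne'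
    have : r s * (q s / r s * log (q s / r s) + 1 - q s / r s)
        = q s * log (q s / r s) - (q s - r s) := by field_simp; ring
    linarith
  rw [← sum_sub_distrib]
  exact sum_le_sum fun s _ => pointwise s

lemma neg_log_sum_le_sum_mul_log_div (q w : S → ℝ) (hq : ∀ s, 0 ≤ q s) (hq1 : ∑ s, q s = 1)
    (hw : ∀ s, 0 < w s) : -log (∑ s, w s) ≤ ∑ s, q s * log (q s / w s) := by
  have hW : 0 < ∑ s, w s :=
    sum_pos (fun s _ => hw s) (nonempty_of_sum_ne_zero (f := q) (by simp [hq1]))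
  have gibbs := sum_sub_sum_le_sum_mul_log_div q (fun s => w s / ∑ t, w t) hq
    (fun s => div_pos (hw s) hW)
  have shift : ∀ s, q s * log (q s / (w s / ∑ t, w t))
      = q s * log (q s / w s) + q s * log (∑ t, w t) := by
    intro s
    rcases eq_or_ne (q s) 0 with h | h
    · simp [h]
    · rw [div_div_eq_mul_div, mul_div_right_comm,
        log_mul (div_ne_zero h (hw s).ne') hW.ne', mul_add]
  simp only [shift, sum_add_distrib, ← sum_mul, ← sum_div, hq1, div_self hW.ne'] at gibbs
  linarith

lemma sum_div_sum_mul_log_div (w : S → ℝ) (hW : ∑ s, w s ≠ 0) :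
    ∑ s, w s / (∑ t, w t) * log (w s / (∑ t, w t) / w s) = -log (∑ s, w s) := by
  have pointwise : ∀ s, w s / (∑ t, w t) * log (w s / (∑ t, w t) / w s)
      = w s / (∑ t, w t) * -log (∑ t, w t) := fun s => by
    rcases eq_or_ne (w s) 0 with h | h
    · simp [h]
    · rw [div_div_cancel_left' h, log_inv]
  rw [sum_congr rfl fun s _ => pointwise s, ← sum_mul, ← sum_div, div_self hW, one_mul]

end Gibbs

lemma mul_log_div_add_sub_one_mul_mul_log_div {τ a b : ℝ} (hτ : τ ≠ 0) (ha : 0 < a) (hb : 0 < b)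
    (x : ℝ) :
    x * log (x / b) + (τ - 1) * (x * log (x / a))
      = τ * (x * log (x / (a ^ (1 - 1 / τ) * b ^ (1 / τ)))) := by
  rcases eq_or_ne x 0 with h | h
  · simp [h]
  · have hab : 0 < a ^ (1 - 1 / τ) * b ^ (1 / τ) := by positivity
    rw [log_div h hb.ne', log_div h ha.ne', log_div h hab.ne',
      log_mul (by positivity) (by positivity), log_rpow ha, log_rpow hb]
    field_simp
    ring

lemma sum_mul_log_div_add_sub_one_mul_sum_mul_log_div {S : Type*} [Fintype S] {τ : ℝ}
    (hτ : τ ≠ 0) {p μ : S → ℝ} (hp : ∀ s, 0 < p s) (hμ : ∀ s, 0 < μ s) (q : S → ℝ) :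
    ∑ s, q s * log (q s / p s) + (τ - 1) * ∑ s, q s * log (q s / μ s)
      = τ * ∑ s, q s * log (q s / (μ s ^ (1 - 1 / τ) * p s ^ (1 / τ))) := by
  simp only [mul_sum, ← sum_add_distrib,
    mul_log_div_add_sub_one_mul_mul_log_div hτ (hμ _) (hp _)]

theorem kl_mixture_minimizer_general
    {S : Type*} [Fintype S] (p μ : S → ℝ) (τ : ℝ) (hτ : 1 < τ)
    (hp0 : ∀ s, 0 < p s) (hμ0 : ∀ s, 0 < μ s)
    (Z : ℝ) (hZ : Z = ∑ s, (μ s) ^ (1 - 1/τ) * (p s) ^ (1/τ))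
    (qstar : S → ℝ) (hqs : ∀ s, qstar s = (μ s) ^ (1 - 1/τ) * (p s) ^ (1/τ) / Z)
    (q : S → ℝ) (hq0 : ∀ s, 0 ≤ q s) (hq1 : ∑ s, q s = 1) :
    (∑ s, qstar s * Real.log (qstar s / p s))
      + (τ - 1) * ∑ s, qstar s * Real.log (qstar s / μ s)
    ≤ (∑ s, q s * Real.log (q s / p s))
      + (τ - 1) * ∑ s, q s * Real.log (q s / μ s) := by
  set w : S → ℝ := fun s => μ s ^ (1 - 1 / τ) * p s ^ (1 / τ)
  have hτ0 : 0 < τ := by linarith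
  have hw : ∀ s, 0 < w s := fun s =>
    mul_pos (rpow_pos_of_pos (hμ0 s) _) (rpow_pos_of_pos (hp0 s) _)
  have hW : 0 < ∑ s, w s :=
    sum_pos (fun s _ => hw s) (nonempty_of_sum_ne_zero (f := q) (by simp [hq1]))
  have hmin : ∑ s, qstar s * log (qstar s / w s) = -log (∑ s, w s) := by
    simp only [hqs, hZ]
    exact sum_div_sum_mul_log_div w hW.ne'
  rw [sum_mul_log_div_add_sub_one_mul_sum_mul_log_div hτ0.ne' hp0 hμ0,
    sum_mul_log_div_add_sub_one_mul_sum_mul_log_div hτ0.ne' hp0 hμ0]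
  change τ * ∑ s, qstar s * log (qstar s / w s) ≤ τ * ∑ s, q s * log (q s / w s)
  rw [hmin]
  exact mul_le_mul_of_nonneg_left (neg_log_sum_le_sum_mul_log_div q w hq0 hq1 hw) hτ0.le

/-- The distribution `q*(s) ∝ μ(s)^{1−1/τ} p(s)^{1/τ}` minimizes
`q ↦ KL(q‖p) + (τ−1)·KL(q‖μ)` over probability distributions `q` on a finite set. -/
theorem kl_mixture_minimizer
    {S : Type*} [Fintype S] [Nonempty S] (p μ : S → ℝ) (τ : ℝ) (hτ : 1 < τ)
    (hp0 : ∀ s, 0 < p s) (hμ0 : ∀ s, 0 < μ s)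
    (hp1 : ∑ s, p s = 1) (hμ1 : ∑ s, μ s = 1)
    (Z : ℝ) (hZ : Z = ∑ s, (μ s) ^ (1 - 1/τ) * (p s) ^ (1/τ))
    (qstar : S → ℝ) (hqs : ∀ s, qstar s = (μ s) ^ (1 - 1/τ) * (p s) ^ (1/τ) / Z)
    (q : S → ℝ) (hq0 : ∀ s, 0 ≤ q s) (hq1 : ∑ s, q s = 1) :
    (∑ s, qstar s * Real.log (qstar s / p s))
      + (τ - 1) * ∑ s, qstar s * Real.log (qstar s / μ s)
    ≤ (∑ s, q s * Real.log (q s / p s))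
      + (τ - 1) * ∑ s, q s * Real.log (q s / μ s) :=
  kl_mixture_minimizer_general p μ τ hτ hp0 hμ0 Z hZ qstar hqs q hq0 hq1
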